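/- arXiv:1412.6892 — 5 statements merged into one kernel-verified Lean document; each statement's English description precedes it below -/
import Mathlib

section
/- Let l12, l13, l23 be positive reals satisfying the strict triangle inequalities, and for w = (w1,w2,w3) ∈ ℝ³ let the vertex-scaled side lengths be l̃ij = exp(wi+wj)·lij. On the open set U ⊆ ℝ³ of those w for which l̃ satisfies the strict triangle inequalities, let θi(w) ∈ (0,π) denote the inner angle at vertex i of the Euclidean triangle with side lengths l̃ (given by the law of cosines, θ1 = arccos((l̃12² + l̃13² − l̃23²)/(2·l̃12·l̃13)), etc.). Then θ1 is differentiable on U and its partial derivative with respect to w2 satisfies ∂θ1/∂w2 = cot θ3 (the cotangent of the angle opposite the edge joining vertices 1 and 2) at every w ∈ U; the analogous formula ∂θi/∂wj = cot θk holds for every permutation (i,j,k) of (1,2,3). -/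
/-!
Write `a, b, c` for the scaled lengths of the edges `ij`, `ik`, `jk`, so that `θᵢ` is the
law-of-cosines angle between `a` and `b`. Moving `w j` alone by `t` multiplies `a` and `c` by
`eᵗ` and fixes `b`, so `∂θᵢ/∂wⱼ` is the derivative at `0` of `t ↦ θ(eᵗa, b, eᵗc)`. Differentiating
`arccos` and using `sin θᵢ = √H / (2ab)`, with `H` Heron's product, this derivative is
`(b² + c² - a²) / √H`, which is `cot θₖ` by the same two formulas at vertex `k`.
-/

/-- Vertex-scaled edge length: `exp (w i + w j) * l i j`. -/
noncomputable def scaledLen (l : Fin 3 → Fin 3 → ℝ) (w : Fin 3 → ℝ) (i j : Fin 3) : ℝ :=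
  Real.exp (w i + w j) * l i j

/-- The inner angle at vertex `i` of the vertex-scaled triangle, by the law of cosines. -/
noncomputable def scaledAngle (l : Fin 3 → Fin 3 → ℝ) (i : Fin 3) (w : Fin 3 → ℝ) : ℝ :=
  Real.arccos ((scaledLen l w i (i + 1) ^ 2 + scaledLen l w i (i + 2) ^ 2
      - scaledLen l w (i + 1) (i + 2) ^ 2) /
    (2 * scaledLen l w i (i + 1) * scaledLen l w i (i + 2)))

open Real

noncomputable def cosOfSides (a b c : ℝ) : ℝ := (a ^ 2 + b ^ 2 - c ^ 2) / (2 * a * b)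

/-- The angle between the sides of lengths `a` and `b`, opposite the side of length `c`. -/
noncomputable def triAngle (a b c : ℝ) : ℝ := arccos (cosOfSides a b c)

/-- Sixteen times the squared area of the triangle with sides `a`, `b`, `c` (Heron's formula). -/
def heron (a b c : ℝ) : ℝ := (a + b + c) * (-a + b + c) * (a - b + c) * (a + b - c)

section TriangleWithSides

variable {a b c : ℝ}

lemma triAngle_comm (a b c : ℝ) : triAngle a b c = triAngle b a c := by
  unfold triAngle cosOfSides; ring_nf

lemma heron_rotate (a b c : ℝ) : heron b c a = heron a b c := by
  unfold heron; ring

lemma heron_pos (hc : c < a + b) (hb : b < a + c) (ha : a < b + c) : 0 < heron a b c := by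
  unfold heron
  have : 0 < a + b + c := by linarith
  have : 0 < -a + b + c := by linarith
  have : 0 < a - b + c := by linarith
  have : 0 < a + b - c := by linarith
  positivity

lemma one_sub_cosOfSides_sq (ha : a ≠ 0) (hb : b ≠ 0) :
    1 - cosOfSides a b c ^ 2 = heron a b c / (2 * a * b) ^ 2 := by
  unfold cosOfSides heron; field_simp; ring

lemma abs_cosOfSides_lt_one (hc : c < a + b) (hb : b < a + c) (ha : a < b + c) :
    |cosOfSides a b c| < 1 := by
  rw [← sq_lt_one_iff_abs_lt_one]
  have ha' : 0 < a := by linarith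
  have hb' : 0 < b := by linarith
  have := one_sub_cosOfSides_sq (c := c) ha'.ne' hb'.ne'
  have := div_pos (heron_pos hc hb ha) (by positivity : (0 : ℝ) < (2 * a * b) ^ 2)
  linarith

lemma cos_triAngle (hc : c < a + b) (hb : b < a + c) (ha : a < b + c) :
    cos (triAngle a b c) = cosOfSides a b c := by
  obtain ⟨h₁, h₂⟩ := abs_lt.mp (abs_cosOfSides_lt_one hc hb ha)
  exact cos_arccos h₁.le h₂.le

lemma sin_triAngle (ha : 0 < a) (hb : 0 < b) :
    sin (triAngle a b c) = √(heron a b c) / (2 * a * b) := by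
  rw [triAngle, sin_arccos, one_sub_cosOfSides_sq ha.ne' hb.ne', sqrt_div' _ (by positivity),
    sqrt_sq (by positivity)]

lemma cot_triAngle (hc : c < a + b) (hb : b < a + c) (ha : a < b + c) :
    cot (triAngle a b c) = (a ^ 2 + b ^ 2 - c ^ 2) / √(heron a b c) := by
  have ha' : 0 < a := by linarith
  have hb' : 0 < b := by linarith
  rw [cot_eq_cos_div_sin, cos_triAngle hc hb ha, sin_triAngle ha' hb', cosOfSides]
  field_simp

lemma hasDerivAt_triAngle_exp_mul (hc : c < a + b) (hb : b < a + c) (ha : a < b + c) :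
    HasDerivAt (fun t => triAngle (exp t * a) b (exp t * c)) (cot (triAngle b c a)) 0 := by
  have ha' : 0 < a := by linarith
  have hb' : 0 < b := by linarith
  have hcos : HasDerivAt (fun t => cosOfSides (exp t * a) b (exp t * c))
      ((a ^ 2 - b ^ 2 - c ^ 2) / (2 * a * b)) 0 := by
    have he := hasDerivAt_exp 0
    have := ((((he.mul_const a).fun_pow 2).add_const (b ^ 2)).fun_sub
      ((he.mul_const c).fun_pow 2)).fun_div (((he.mul_const a).const_mul 2).mul_const b)
      (by positivity)
    refine this.congr_deriv ?_
    simp only [exp_zero]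
    field_simp
    ring
  obtain ⟨h₁, h₂⟩ := abs_lt.mp (abs_cosOfSides_lt_one hc hb ha)
  have harccos := (hasDerivAt_arccos h₁.ne' h₂.ne).comp_of_eq 0 hcos (by simp)
  refine harccos.congr_deriv ?_
  rw [← sin_arccos, ← triAngle, sin_triAngle ha' hb', cot_triAngle (by linarith) (by linarith)
    (by linarith), heron_rotate a b c]
  field_simp
  ring

end TriangleWithSides

lemma DifferentiableAt.triAngle {E : Type*} [NormedAddCommGroup E] [NormedSpace ℝ E]
    {f g h : E → ℝ} {x : E} (hf : DifferentiableAt ℝ f x) (hg : DifferentiableAt ℝ g x)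
    (hh : DifferentiableAt ℝ h x) (hc : h x < f x + g x) (hb : g x < f x + h x)
    (ha : f x < g x + h x) :
    DifferentiableAt ℝ (fun y => triAngle (f y) (g y) (h y)) x := by
  obtain ⟨h₁, h₂⟩ := abs_lt.mp (abs_cosOfSides_lt_one hc hb ha)
  refine (differentiableAt_arccos.2 ⟨h₁.ne', h₂.ne⟩).comp x ?_
  have hfx : f x ≠ 0 := by linarith
  have hgx : g x ≠ 0 := by linarith
  unfold cosOfSides
  fun_prop (disch := simp [hfx, hgx])

lemma Fin.three_cases {i j k : Fin 3} (hij : i ≠ j) (hjk : j ≠ k) (hik : i ≠ k) :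
    (j = i + 1 ∧ k = i + 2) ∨ (j = i + 2 ∧ k = i + 1) := by
  revert i j k; decide

section ScaledTriangle

variable {l : Fin 3 → Fin 3 → ℝ}

lemma scaledLen_comm (hsymm : ∀ i j, l i j = l j i) (w : Fin 3 → ℝ) (i j : Fin 3) :
    scaledLen l w i j = scaledLen l w j i := by
  rw [scaledLen, scaledLen, hsymm, add_comm]

lemma scaledLen_add (l : Fin 3 → Fin 3 → ℝ) (w u : Fin 3 → ℝ) (i j : Fin 3) :
    scaledLen l (w + u) i j = exp (u i + u j) * scaledLen l w i j := by
  simp only [scaledLen, Pi.add_apply, ← mul_assoc, ← exp_add]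
  ring_nf

lemma differentiable_scaledLen (l : Fin 3 → Fin 3 → ℝ) (i j : Fin 3) :
    Differentiable ℝ (fun w => scaledLen l w i j) := by
  unfold scaledLen
  fun_prop

lemma scaledAngle_eq_triAngle (hsymm : ∀ i j, l i j = l j i) {i j k : Fin 3} (hij : i ≠ j)
    (hjk : j ≠ k) (hik : i ≠ k) (w : Fin 3 → ℝ) :
    scaledAngle l i w = triAngle (scaledLen l w i j) (scaledLen l w i k) (scaledLen l w j k) := by
  rcases Fin.three_cases hij hjk hik with ⟨rfl, rfl⟩ | ⟨rfl, rfl⟩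
  · rfl
  · rw [triAngle_comm, scaledLen_comm hsymm w (i + 2)]
    rfl

lemma scaledAngle_add_smul_single (hsymm : ∀ i j, l i j = l j i) {i j k : Fin 3} (hij : i ≠ j)
    (hjk : j ≠ k) (hik : i ≠ k) (w : Fin 3 → ℝ) (t : ℝ) :
    scaledAngle l i (w + t • Pi.single j 1) =
      triAngle (exp t * scaledLen l w i j) (scaledLen l w i k) (exp t * scaledLen l w j k) := by
  simp [scaledAngle_eq_triAngle hsymm hij hjk hik, scaledLen_add, hij, hjk]

lemma scaledLen_lt_add {w : Fin 3 → ℝ} (hsymm : ∀ i j, l i j = l j i)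
    (hw : ∀ i : Fin 3,
      scaledLen l w (i + 1) (i + 2) < scaledLen l w i (i + 1) + scaledLen l w i (i + 2))
    {i j k : Fin 3} (hij : i ≠ j) (hjk : j ≠ k) (hik : i ≠ k) :
    scaledLen l w j k < scaledLen l w i j + scaledLen l w i k := by
  rcases Fin.three_cases hij hjk hik with ⟨rfl, rfl⟩ | ⟨rfl, rfl⟩
  · exact hw i
  · rw [scaledLen_comm hsymm w (i + 2), add_comm (scaledLen l w i (i + 2))]
    exact hw i

end ScaledTriangle

theorem angle_partial_deriv_eq_cot_general
    (l : Fin 3 → Fin 3 → ℝ)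
    (hsymm : ∀ i j, l i j = l j i)
    (w : Fin 3 → ℝ)
    (hw : ∀ i : Fin 3,
      scaledLen l w (i + 1) (i + 2) < scaledLen l w i (i + 1) + scaledLen l w i (i + 2))
    (i j k : Fin 3) (hij : i ≠ j) (hjk : j ≠ k) (hik : i ≠ k) :
    DifferentiableAt ℝ (scaledAngle l i) w ∧
    fderiv ℝ (scaledAngle l i) w (Pi.single j 1) = Real.cot (scaledAngle l k w) := by
  set L := scaledLen l w
  have hc : L j k < L i j + L i k := scaledLen_lt_add hsymm hw hij hjk hik
  have hb : L i k < L i j + L j k := by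
    simpa [L, scaledLen_comm hsymm w j i] using scaledLen_lt_add hsymm hw hij.symm hik hjk
  have ha : L i j < L i k + L j k := by
    simpa [L, scaledLen_comm hsymm w k i, scaledLen_comm hsymm w k j]
      using scaledLen_lt_add hsymm hw hik.symm hij hjk.symm
  have hangle := funext (scaledAngle_eq_triAngle hsymm hij hjk hik)
  have hdiff : DifferentiableAt ℝ (scaledAngle l i) w := by
    rw [hangle]
    exact .triAngle (differentiable_scaledLen l i j w) (differentiable_scaledLen l i k w)
      (differentiable_scaledLen l j k w) hc hb ha
  refine ⟨hdiff, ?_⟩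
  have hline : HasDerivAt (fun t : ℝ => w + t • Pi.single j 1) (Pi.single j 1) 0 := by
    simpa using ((hasDerivAt_id (0 : ℝ)).smul_const (Pi.single j (1 : ℝ))).const_add w
  have hcomp := hdiff.hasFDerivAt.comp_hasDerivAt_of_eq 0 hline (by simp)
  rw [show scaledAngle l i ∘ (fun t : ℝ => w + t • Pi.single j 1) =
      fun t => triAngle (exp t * L i j) (L i k) (exp t * L j k) from
    funext (scaledAngle_add_smul_single hsymm hij hjk hik w)] at hcomp
  rw [hcomp.unique (hasDerivAt_triAngle_exp_mul hc hb ha),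
    scaledAngle_eq_triAngle hsymm hik.symm hij hjk.symm, scaledLen_comm hsymm w k,
    scaledLen_comm hsymm w k]

theorem angle_partial_deriv_eq_cot
    (l : Fin 3 → Fin 3 → ℝ)
    (hsymm : ∀ i j, l i j = l j i)
    (hpos : ∀ i j, i ≠ j → 0 < l i j)
    (htri : ∀ i : Fin 3, l (i + 1) (i + 2) < l i (i + 1) + l i (i + 2))
    (w : Fin 3 → ℝ)
    (hw : ∀ i : Fin 3,
      scaledLen l w (i + 1) (i + 2) < scaledLen l w i (i + 1) + scaledLen l w i (i + 2))
    (i j k : Fin 3) (hij : i ≠ j) (hjk : j ≠ k) (hik : i ≠ k) :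
    DifferentiableAt ℝ (scaledAngle l i) w ∧
    fderiv ℝ (scaledAngle l i) w (Pi.single j 1) = Real.cot (scaledAngle l k w) :=
  angle_partial_deriv_eq_cot_general l hsymm w hw i j k hij hjk hik
end

section
/- Let p1, p2, p3 and q1, q2, q3 be two affinely independent triples of points in the Euclidean plane ℝ², and let w ∈ ℝ³ satisfy dist(qi,qj) = exp(wi+wj)·dist(pi,pj) for all i ≠ j. For a point x of the plane with barycentric coordinates (u1,u2,u3) with respect to (p1,p2,p3) (so u1+u2+u3 = 1), set z(x) = u1·exp(−2w1) + u2·exp(−2w2) + u3·exp(−2w3), and when z(x) ≠ 0 define φ(x) to be the point with barycentric coordinates (u1·exp(−2w1)/z(x), u2·exp(−2w2)/z(x), u3·exp(−2w3)/z(x)) with respect to (q1,q2,q3). Then φ maps the circumcircle of p1p2p3 to the circumcircle of q1q2q3: every point x lying on the circle through p1, p2, p3 with z(x) ≠ 0 satisfies that φ(x) lies on the circle through q1, q2, q3. -/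
open scoped RealInnerProductSpace

open Finset in
lemma dist_bary_sq {E : Type*} [NormedAddCommGroup E] [InnerProductSpace ℝ E]
    (c : E) (p : Fin 3 → E) (v : Fin 3 → ℝ) (hv : ∑ i, v i = 1) :
    dist c (∑ i, v i • p i)^2 =
      ∑ i, v i * dist c (p i)^2 - (1/2) * ∑ i, ∑ j, v i * v j * dist (p i) (p j)^2 := by
  set a : Fin 3 → E := fun i => c - p i with ha
  have hca : c - ∑ i, v i • p i = ∑ i, v i • a i := by
    simp only [ha, smul_sub, Finset.sum_sub_distrib, ← Finset.sum_smul, hv, one_smul]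
  have hdist : ∀ i j, dist (p i) (p j)^2 = ‖a i - a j‖^2 := by
    intro i j
    rw [dist_eq_norm', show a i - a j = p j - p i by simp only [ha]; abel]
  rw [dist_eq_norm, hca]
  simp only [hdist, fun i => (dist_eq_norm c (p i)), fun i => show c - p i = a i from rfl]
  simp only [Fin.sum_univ_three, ← real_inner_self_eq_norm_sq,
    inner_sub_sub_self, inner_add_add_self, inner_smul_left, inner_smul_right,
    inner_add_left, inner_add_right, RCLike.conj_to_real]
  have hv3 : v 0 + v 1 + v 2 = 1 := by simpa [Fin.sum_univ_three] using hv
  linear_combination (v 0 * ⟪a 0, a 0⟫ + v 1 * ⟪a 1, a 1⟫ + v 2 * ⟪a 2, a 2⟫) * hv3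

theorem ccp_map_sends_circumcircle_to_circumcircle
    (p q : Fin 3 → EuclideanSpace ℝ (Fin 2))
    (hp : AffineIndependent ℝ p) (hq : AffineIndependent ℝ q)
    (w : Fin 3 → ℝ)
    (hscale : ∀ i j, i ≠ j → dist (q i) (q j) = Real.exp (w i + w j) * dist (p i) (p j))
    (x : EuclideanSpace ℝ (Fin 2)) (u : Fin 3 → ℝ)
    (husum : ∑ i, u i = 1) (hx : x = ∑ i, u i • p i)
    (z : ℝ) (hz : z = ∑ i, u i * Real.exp (-2 * w i)) (hz0 : z ≠ 0)
    (cp : EuclideanSpace ℝ (Fin 2)) (rp : ℝ) (hcp : ∀ i, dist cp (p i) = rp)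
    (hxcirc : dist cp x = rp)
    (cq : EuclideanSpace ℝ (Fin 2)) (rq : ℝ) (hcq : ∀ i, dist cq (q i) = rq) :
    dist cq (∑ i, ((u i * Real.exp (-2 * w i)) / z) • q i) = rq := by
  -- S = 0
  have hS : ∑ i, ∑ j, u i * u j * dist (p i) (p j)^2 = 0 := by
    have h1 := dist_bary_sq cp p u husum
    rw [← hx, hxcirc] at h1
    have h2 : ∑ i, u i * dist cp (p i)^2 = rp^2 := by
      simp only [hcp, ← Finset.sum_mul, husum, one_mul]
    linarith [h1, h2]
  set v : Fin 3 → ℝ := fun i => u i * Real.exp (-2 * w i) / z with hv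
  have hvsum : ∑ i, v i = 1 := by
    simp only [hv, ← Finset.sum_div, ← hz, div_self hz0]
  have key := dist_bary_sq cq q v hvsum
  have h3 : ∑ i, v i * dist cq (q i)^2 = rq^2 := by
    simp only [hcq, ← Finset.sum_mul, hvsum, one_mul]
  have hterm : ∀ i j : Fin 3, v i * v j * dist (q i) (q j)^2
      = u i * u j * dist (p i) (p j)^2 / z^2 := by
    intro i j
    by_cases hij : i = j
    · simp [hij]
    · rw [hscale i j hij]
      have hE : Real.exp (-2*w i) * Real.exp (-2*w j) * Real.exp (w i + w j) ^ 2 = 1 := by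
        rw [sq, ← Real.exp_add, ← Real.exp_add, ← Real.exp_add, ← Real.exp_zero]
        ring_nf
      calc v i * v j * (Real.exp (w i + w j) * dist (p i) (p j))^2
          = (u i * u j * dist (p i) (p j)^2 / z^2) *
            (Real.exp (-2*w i) * Real.exp (-2*w j) * Real.exp (w i + w j) ^ 2) := by
            simp only [hv]; ring
        _ = u i * u j * dist (p i) (p j)^2 / z^2 := by rw [hE, mul_one]
  have h4 : ∑ i, ∑ j, v i * v j * dist (q i) (q j)^2 = 0 := by
    calc ∑ i, ∑ j, v i * v j * dist (q i) (q j)^2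
        = ∑ i, ∑ j, u i * u j * dist (p i) (p j)^2 / z^2 := by
          exact Finset.sum_congr rfl fun i _ => Finset.sum_congr rfl fun j _ => hterm i j
      _ = (∑ i, ∑ j, u i * u j * dist (p i) (p j)^2) / z^2 := by
          simp only [← Finset.sum_div]
      _ = 0 := by rw [hS]; simp
  rw [h3, h4] at key
  have hd : dist cq (∑ i, v i • q i) ^ 2 = rq ^ 2 := by linarith
  have hrq : 0 ≤ rq := (hcq 0) ▸ dist_nonneg
  nlinarith [dist_nonneg (x := cq) (y := ∑ i, v i • q i), hd, hrq]
end

section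
/- Let p1, p2, p3, p4 be points in the Euclidean plane ℝ² such that the triples (p1,p2,p3) and (p1,p2,p4) are each affinely independent, let q1, q2, q3, q4 be points in ℝ² with the triples (q1,q2,q3) and (q1,q2,q4) each affinely independent, and let w ∈ ℝ⁴ satisfy dist(qi,qj) = exp(wi+wj)·dist(pi,pj) for (i,j) ∈ {(1,2),(1,3),(2,3),(1,4),(2,4)}. Let φ123 be the circumcircle-preserving projective map determined by (p1,p2,p3), (q1,q2,q3) and (w1,w2,w3), and φ124 the one determined by (p1,p2,p4), (q1,q2,q4) and (w1,w2,w4). Then φ123 and φ124 are both defined at every point of the closed segment from p1 to p2 and they agree on this segment. -/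
lemma bary_unique {V : Type*} [AddCommGroup V] [Module ℝ V]
    (p1 p2 p3 : V) (hp : AffineIndependent ℝ ![p1, p2, p3])
    (a b : ℝ) (hab : a + b = 1) (u : Fin 3 → ℝ)
    (husum : u 0 + u 1 + u 2 = 1)
    (hxu : a • p1 + b • p2 = u 0 • p1 + u 1 • p2 + u 2 • p3) :
    u 0 = a ∧ u 1 = b ∧ u 2 = 0 := by
  have key := affineIndependent_iff.1 hp Finset.univ ![u 0 - a, u 1 - b, u 2] ?_ ?_
  · refine ⟨?_, ?_, ?_⟩
    · have := key 0 (Finset.mem_univ _); simp at this; linarith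
    · have := key 1 (Finset.mem_univ _); simp at this; linarith
    · have := key 2 (Finset.mem_univ _); simpa using this
  · simp [Fin.sum_univ_three]; linarith
  · simp only [Fin.sum_univ_three]
    simp only [Matrix.cons_val_zero, Matrix.cons_val_one, Matrix.head_cons,
      Matrix.cons_val_two, Matrix.tail_cons, sub_smul]
    have : u 0 • p1 + u 1 • p2 + u 2 • p3 - (a • p1 + b • p2) = 0 := by
      rw [← hxu]; abel
    rw [← this]; abel

theorem ccp_maps_agree_on_common_edge
    (p1 p2 p3 p4 q1 q2 q3 q4 : EuclideanSpace ℝ (Fin 2))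
    (hp123 : AffineIndependent ℝ ![p1, p2, p3])
    (hp124 : AffineIndependent ℝ ![p1, p2, p4])
    (hq123 : AffineIndependent ℝ ![q1, q2, q3])
    (hq124 : AffineIndependent ℝ ![q1, q2, q4])
    (w1 w2 w3 w4 : ℝ)
    (hd12 : dist q1 q2 = Real.exp (w1 + w2) * dist p1 p2)
    (hd13 : dist q1 q3 = Real.exp (w1 + w3) * dist p1 p3)
    (hd23 : dist q2 q3 = Real.exp (w2 + w3) * dist p2 p3)
    (hd14 : dist q1 q4 = Real.exp (w1 + w4) * dist p1 p4)
    (hd24 : dist q2 q4 = Real.exp (w2 + w4) * dist p2 p4)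
    (x : EuclideanSpace ℝ (Fin 2)) (hx : x ∈ segment ℝ p1 p2)
    (u u' : Fin 3 → ℝ)
    (husum : u 0 + u 1 + u 2 = 1) (hxu : x = u 0 • p1 + u 1 • p2 + u 2 • p3)
    (husum' : u' 0 + u' 1 + u' 2 = 1) (hxu' : x = u' 0 • p1 + u' 1 • p2 + u' 2 • p4)
    (z z' : ℝ)
    (hz : z = u 0 * Real.exp (-2 * w1) + u 1 * Real.exp (-2 * w2) + u 2 * Real.exp (-2 * w3))
    (hz' : z' = u' 0 * Real.exp (-2 * w1) + u' 1 * Real.exp (-2 * w2)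
        + u' 2 * Real.exp (-2 * w4)) :
    z ≠ 0 ∧ z' ≠ 0 ∧
      (u 0 * Real.exp (-2 * w1) / z) • q1 + (u 1 * Real.exp (-2 * w2) / z) • q2
          + (u 2 * Real.exp (-2 * w3) / z) • q3
        = (u' 0 * Real.exp (-2 * w1) / z') • q1 + (u' 1 * Real.exp (-2 * w2) / z') • q2
          + (u' 2 * Real.exp (-2 * w4) / z') • q4 := by
  obtain ⟨a, b, ha, hb, hab, hxab⟩ := hx
  obtain ⟨h0, h1, h2⟩ := bary_unique p1 p2 p3 hp123 a b hab u husum (hxab.trans hxu)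
  obtain ⟨h0', h1', h2'⟩ := bary_unique p1 p2 p4 hp124 a b hab u' husum' (hxab.trans hxu')
  have hzpos : 0 < z := by
    rw [hz, h0, h1, h2]
    have e1 := Real.exp_pos (-2 * w1)
    have e2 := Real.exp_pos (-2 * w2)
    rcases ha.lt_or_eq with h | h
    · nlinarith
    · nlinarith
  have hz'eq : z' = z := by rw [hz, hz', h0, h1, h2, h0', h1', h2']; ring
  refine ⟨hzpos.ne', by rw [hz'eq]; exact hzpos.ne', ?_⟩
  rw [hz'eq, h0, h1, h2, h0', h1', h2']
  simp
end

section
/- Let p1, p2, p3 and q1, q2, q3 be affinely independent triples in the Euclidean plane ℝ², w ∈ ℝ³, and let φ be the circumcircle-preserving projective map determined by these triples and w. If x, y, z are three collinear points of the plane at each of which φ is defined (i.e. the denominator is nonzero), then φ(x), φ(y), φ(z) are collinear. In particular, within a triangle φ maps straight segments to straight segments. -/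
/-! In barycentric coordinates `φ` is a projective map: it is the linear map
`u ↦ ∑ i, (uᵢ e^{-2wᵢ}) • qᵢ` followed by division by the linear form `u ↦ ∑ i, uᵢ e^{-2wᵢ}`.
Collinear points have linearly dependent barycentric coordinate vectors (the barycentric
coordinates of an affinely independent triple determine the point), and a projective map sends
points with linearly dependent lifts to points satisfying an affine relation, i.e. to collinear
points. -/

section Ring

variable {k U V ι : Type*} [Ring k] [AddCommGroup U] [Module k U] [AddCommGroup V] [Module k V]
  [Fintype ι]

theorem not_affineIndependent_iff_of_fintype {p : ι → V} :
    ¬AffineIndependent k p ↔ ∃ c : ι → k, ∑ i, c i = 0 ∧ ∑ i, c i • p i = 0 ∧ ∃ i, c i ≠ 0 := by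
  simp only [affineIndependent_iff_of_fintype, not_forall, exists_prop]
  refine exists_congr fun c => and_congr_right fun hc => ?_
  rw [Finset.univ.weightedVSub_eq_linear_combination hc]

theorem not_linearIndependent_of_not_affineIndependent_comp (A : U →ₗ[k] V) (σ : U →ₗ[k] k)
    (hA : ∀ v, σ v = 0 → A v = 0 → v = 0) {u : ι → U} (hσ : ∀ j, σ (u j) = 1)
    (hAu : ¬AffineIndependent k (A ∘ u)) : ¬LinearIndependent k u := by
  obtain ⟨c, hc, hcA, j, hj⟩ := not_affineIndependent_iff_of_fintype.1 hAu
  refine Fintype.not_linearIndependent_iff.2 ⟨c, hA _ ?_ ?_, j, hj⟩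
  · simpa [hσ] using hc
  · simpa using hcA

end Ring

section DivisionRing

variable {k U V ι : Type*} [DivisionRing k] [AddCommGroup U] [Module k U] [AddCommGroup V]
  [Module k V] [Fintype ι]

theorem not_affineIndependent_inv_smul_of_not_linearIndependent (L : U →ₗ[k] V) (ℓ : U →ₗ[k] k)
    {u : ι → U} (hu : ¬LinearIndependent k u) (hℓ : ∀ j, ℓ (u j) ≠ 0) :
    ¬AffineIndependent k fun j => (ℓ (u j))⁻¹ • L (u j) := by
  obtain ⟨c, hcu, j, hj⟩ := Fintype.not_linearIndependent_iff.1 hu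
  -- rescaling the coefficients `c j` of the linear relation by the denominators `ℓ (u j)`
  -- gives an affine relation among the images
  refine not_affineIndependent_iff_of_fintype.2
    ⟨fun j => c j * ℓ (u j), ?_, ?_, j, mul_ne_zero hj (hℓ j)⟩
  · simpa using congrArg ℓ hcu
  · simpa [mul_smul, smul_smul, hℓ] using congrArg L hcu

end DivisionRing

theorem ccp_map_preserves_collinearity_general
    (p q : Fin 3 → EuclideanSpace ℝ (Fin 2))
    (hp : AffineIndependent ℝ p)
    (w : Fin 3 → ℝ)
    (x y z : EuclideanSpace ℝ (Fin 2))
    (hcol : Collinear ℝ ({x, y, z} : Set (EuclideanSpace ℝ (Fin 2))))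
    (ux uy uz : Fin 3 → ℝ)
    (hux : ∑ i, ux i = 1) (hx : x = ∑ i, ux i • p i)
    (huy : ∑ i, uy i = 1) (hy : y = ∑ i, uy i • p i)
    (huz : ∑ i, uz i = 1) (hzz : z = ∑ i, uz i • p i)
    (zx zy zz : ℝ)
    (hzx : zx = ∑ i, ux i * Real.exp (-2 * w i)) (hzx0 : zx ≠ 0)
    (hzy : zy = ∑ i, uy i * Real.exp (-2 * w i)) (hzy0 : zy ≠ 0)
    (hzzz : zz = ∑ i, uz i * Real.exp (-2 * w i)) (hzz0 : zz ≠ 0) :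
    Collinear ℝ ({∑ i, (ux i * Real.exp (-2 * w i) / zx) • q i,
                  ∑ i, (uy i * Real.exp (-2 * w i) / zy) • q i,
                  ∑ i, (uz i * Real.exp (-2 * w i) / zz) • q i} :
      Set (EuclideanSpace ℝ (Fin 2))) := by
  set u : Fin 3 → Fin 3 → ℝ := ![ux, uy, uz]
  have hpts : Fintype.linearCombination ℝ p ∘ u = ![x, y, z] := by
    ext j : 1; fin_cases j <;> simp [u, hx, hy, hzz, Fintype.linearCombination_apply]
  have hdep : ¬LinearIndependent ℝ u := by
    refine not_linearIndependent_of_not_affineIndependent_comp (Fintype.linearCombination ℝ p)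
      (Fintype.linearCombination ℝ 1) (fun v hv₀ hv₁ => funext fun i => ?_) ?_ ?_
    · simp only [Fintype.linearCombination_apply, Pi.one_apply, smul_eq_mul, mul_one] at hv₀ hv₁
      exact hp.eq_zero_of_sum_eq_zero hv₀ hv₁ i (Finset.mem_univ i)
    · intro j; fin_cases j <;> simp [u, hux, huy, huz, Fintype.linearCombination_apply]
    · rwa [hpts, affineIndependent_iff_not_collinear_set, not_not]
  set L := Fintype.linearCombination ℝ fun i => Real.exp (-2 * w i) • q i
  set ℓ := Fintype.linearCombination ℝ fun i => Real.exp (-2 * w i)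
  have hℓ : ℓ ∘ u = ![zx, zy, zz] := by
    ext j : 1; fin_cases j <;> simp [u, ℓ, hzx, hzy, hzzz, Fintype.linearCombination_apply]
  have himg : (fun j => (ℓ (u j))⁻¹ • L (u j)) =
      ![∑ i, (ux i * Real.exp (-2 * w i) / zx) • q i, ∑ i, (uy i * Real.exp (-2 * w i) / zy) • q i,
        ∑ i, (uz i * Real.exp (-2 * w i) / zz) • q i] := by
    ext j : 1
    rw [← Function.comp_apply (f := ⇑ℓ), hℓ]
    fin_cases j <;>
      simp [u, L, Fintype.linearCombination_apply, Finset.smul_sum, smul_smul, div_eq_inv_mul]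
  have key := not_affineIndependent_inv_smul_of_not_linearIndependent L ℓ hdep fun j => by
    rw [← Function.comp_apply (f := ⇑ℓ), hℓ]; fin_cases j <;> simpa
  rwa [himg, affineIndependent_iff_not_collinear_set, not_not] at key

theorem ccp_map_preserves_collinearity
    (p q : Fin 3 → EuclideanSpace ℝ (Fin 2))
    (hp : AffineIndependent ℝ p) (hq : AffineIndependent ℝ q)
    (w : Fin 3 → ℝ)
    (x y z : EuclideanSpace ℝ (Fin 2))
    (hcol : Collinear ℝ ({x, y, z} : Set (EuclideanSpace ℝ (Fin 2))))
    (ux uy uz : Fin 3 → ℝ)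
    (hux : ∑ i, ux i = 1) (hx : x = ∑ i, ux i • p i)
    (huy : ∑ i, uy i = 1) (hy : y = ∑ i, uy i • p i)
    (huz : ∑ i, uz i = 1) (hzz : z = ∑ i, uz i • p i)
    (zx zy zz : ℝ)
    (hzx : zx = ∑ i, ux i * Real.exp (-2 * w i)) (hzx0 : zx ≠ 0)
    (hzy : zy = ∑ i, uy i * Real.exp (-2 * w i)) (hzy0 : zy ≠ 0)
    (hzzz : zz = ∑ i, uz i * Real.exp (-2 * w i)) (hzz0 : zz ≠ 0) :
    Collinear ℝ ({∑ i, (ux i * Real.exp (-2 * w i) / zx) • q i,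
                  ∑ i, (uy i * Real.exp (-2 * w i) / zy) • q i,
                  ∑ i, (uz i * Real.exp (-2 * w i) / zz) • q i} :
      Set (EuclideanSpace ℝ (Fin 2))) :=
  ccp_map_preserves_collinearity_general p q hp w x y z hcol ux uy uz hux hx huy hy huz hzz zx zy zz
    hzx hzx0 hzy hzy0 hzzz hzz0
end

section
/- Let p1, p2, p3 and q1, q2, q3 be affinely independent triples in the Euclidean plane ℝ², w ∈ ℝ³, and let φ be the circumcircle-preserving projective map determined by these triples and w. Then at every point of the closed triangle conv{p1,p2,p3} the denominator z is strictly positive (so φ is defined there), φ(pi) = qi for i = 1,2,3, and φ restricts to a bijection from the closed triangle conv{p1,p2,p3} onto the closed triangle conv{q1,q2,q3}. -/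
private lemma coord_sum_smul (c : AffineBasis (Fin 3) ℝ (EuclideanSpace ℝ (Fin 2)))
    (v : Fin 3 → ℝ) (hv : ∑ i, v i = 1) (j : Fin 3) :
    c.coord j (∑ i, v i • c i) = v j := by
  rw [← Finset.univ.affineCombination_eq_linear_combination _ _ hv]
  exact c.coord_apply_combination_of_mem (Finset.mem_univ j) hv

private lemma pos_sum (u e : Fin 3 → ℝ) (hu : ∀ i, 0 ≤ u i) (hs : ∑ i, u i = 1)
    (he : ∀ i, 0 < e i) : 0 < ∑ i, u i * e i := by
  have : ∃ j ∈ Finset.univ, 0 < u j := by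
    by_contra h
    push_neg at h
    have : ∑ i, u i ≤ 0 := Finset.sum_nonpos fun i _ => h i (Finset.mem_univ i)
    linarith
  obtain ⟨j, _, hj⟩ := this
  exact Finset.sum_pos' (fun i _ => mul_nonneg (hu i) (he i).le)
    ⟨j, Finset.mem_univ j, mul_pos hj (he j)⟩

theorem ccp_map_bijOn_triangle
    (p q : Fin 3 → EuclideanSpace ℝ (Fin 2))
    (hp : AffineIndependent ℝ p)
    (hsp : affineSpan ℝ (Set.range p) = ⊤)
    (hq : AffineIndependent ℝ q)
    (w : Fin 3 → ℝ) :
    let b : AffineBasis (Fin 3) ℝ (EuclideanSpace ℝ (Fin 2)) := ⟨p, hp, hsp⟩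
    let zf : EuclideanSpace ℝ (Fin 2) → ℝ :=
      fun x => ∑ i, b.coord i x * Real.exp (-2 * w i)
    let φ : EuclideanSpace ℝ (Fin 2) → EuclideanSpace ℝ (Fin 2) :=
      fun x => ∑ i, ((b.coord i x * Real.exp (-2 * w i)) / zf x) • q i
    (∀ x ∈ convexHull ℝ (Set.range p), 0 < zf x) ∧
    (∀ i, φ (p i) = q i) ∧
    Set.BijOn φ (convexHull ℝ (Set.range p)) (convexHull ℝ (Set.range q)) := by
  intro b zf φ
  have hsq : affineSpan ℝ (Set.range q) = ⊤ := by
    rw [hq.affineSpan_eq_top_iff_card_eq_finrank_add_one]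
    simp [finrank_euclideanSpace_fin]
  set c : AffineBasis (Fin 3) ℝ (EuclideanSpace ℝ (Fin 2)) := ⟨q, hq, hsq⟩ with hc
  have hcb : ∀ i, c i = q i := fun i => rfl
  have hbb : ∀ i, b i = p i := fun i => rfl
  have hrb : Set.range (⇑b) = Set.range p := rfl
  have hrc : Set.range (⇑c) = Set.range q := rfl
  have he : ∀ i, 0 < Real.exp (-2 * w i) := fun i => Real.exp_pos _
  -- membership characterization
  have hmemp : ∀ x, x ∈ convexHull ℝ (Set.range p) ↔ ∀ i, 0 ≤ b.coord i x := by
    intro x; rw [← hrb, b.convexHull_eq_nonneg_coord]; rfl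
  have hmemq : ∀ x, x ∈ convexHull ℝ (Set.range q) ↔ ∀ i, 0 ≤ c.coord i x := by
    intro x; rw [← hrc, c.convexHull_eq_nonneg_coord]; rfl
  have hzpos : ∀ x ∈ convexHull ℝ (Set.range p), 0 < zf x := by
    intro x hx
    exact pos_sum _ _ ((hmemp x).mp hx) (b.sum_coord_apply_eq_one x) he
  -- coordinates of φ x
  have hsumv : ∀ x, zf x ≠ 0 →
      ∑ i, (b.coord i x * Real.exp (-2 * w i)) / zf x = 1 := by
    intro x hx
    rw [← Finset.sum_div]
    exact div_self hx
  have hcoordφ : ∀ x, zf x ≠ 0 → ∀ j,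
      c.coord j (φ x) = (b.coord j x * Real.exp (-2 * w j)) / zf x := by
    intro x hx j
    exact coord_sum_smul c _ (hsumv x hx) j
  refine ⟨hzpos, ?_, ?_, ?_, ?_⟩
  · -- φ (p i) = q i
    intro i
    have hco : ∀ j, b.coord j (p i) = if j = i then 1 else 0 := by
      intro j; rw [← hbb i, b.coord_apply]
    have hz : zf (p i) = Real.exp (-2 * w i) := by
      simp [zf, hco]
    show (∑ j, ((b.coord j (p i) * Real.exp (-2 * w j)) / zf (p i)) • q j) = q i
    rw [hz]
    rw [Finset.sum_eq_single i]
    · rw [hco i]; simp [div_self (he i).ne']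
    · intro j _ hji; rw [hco j]; simp [hji]
    · simp
  · -- MapsTo
    intro x hx
    have hz := hzpos x hx
    rw [hmemq]
    intro j
    rw [hcoordφ x hz.ne' j]
    exact div_nonneg (mul_nonneg ((hmemp x).mp hx j) (he j).le) hz.le
  · -- InjOn
    intro x hx y hy hxy
    have hzx := hzpos x hx
    have hzy := hzpos y hy
    have hcc : ∀ j, b.coord j x / zf x = b.coord j y / zf y := by
      intro j
      have := (hcoordφ x hzx.ne' j).symm.trans ((congrArg (c.coord j) hxy).trans (hcoordφ y hzy.ne' j))
      rw [div_eq_div_iff hzx.ne' hzy.ne'] at this ⊢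
      have hej := (he j).ne'
      have h2 : (b.coord j x * zf y) * Real.exp (-2 * w j)
          = (b.coord j y * zf x) * Real.exp (-2 * w j) := by linear_combination this
      exact mul_right_cancel₀ hej h2
    have hzz : zf x = zf y := by
      have h1 : ∑ j, b.coord j x / zf x = ∑ j, b.coord j y / zf y :=
        Finset.sum_congr rfl fun j _ => hcc j
      rw [← Finset.sum_div, ← Finset.sum_div, b.sum_coord_apply_eq_one,
        b.sum_coord_apply_eq_one] at h1
      field_simp at h1
      linarith
    refine b.ext_elem fun j => ?_
    have := hcc j
    rw [hzz] at this
    rw [div_eq_div_iff hzy.ne' hzy.ne'] at this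
    exact mul_right_cancel₀ hzy.ne' this
  · -- SurjOn
    intro y hy
    set v : Fin 3 → ℝ := fun j => c.coord j y with hv
    have hv0 : ∀ j, 0 ≤ v j := (hmemq y).mp hy
    have hv1 : ∑ j, v j = 1 := c.sum_coord_apply_eq_one y
    set s : ℝ := ∑ j, v j * Real.exp (2 * w j) with hs
    have hspos : 0 < s := pos_sum _ _ hv0 hv1 (fun j => Real.exp_pos _)
    set u : Fin 3 → ℝ := fun j => v j * Real.exp (2 * w j) / s with hu
    have hu0 : ∀ j, 0 ≤ u j := fun j =>
      div_nonneg (mul_nonneg (hv0 j) (Real.exp_pos _).le) hspos.le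
    have hu1 : ∑ j, u j = 1 := by
      rw [hu]; simp only; rw [← Finset.sum_div, ← hs, div_self hspos.ne']
    set x : EuclideanSpace ℝ (Fin 2) := ∑ j, u j • p j with hxdef
    have hcx : ∀ j, b.coord j x = u j := fun j => coord_sum_smul b u hu1 j
    have hxmem : x ∈ convexHull ℝ (Set.range p) := by
      rw [hmemp]; intro j; rw [hcx j]; exact hu0 j
    refine ⟨x, hxmem, ?_⟩
    have hue : ∀ j, u j * Real.exp (-2 * w j) = v j / s := by
      intro j
      rw [hu]
      simp only
      rw [div_mul_eq_mul_div, mul_assoc, ← Real.exp_add]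
      ring_nf
      simp
    have hzx : zf x = 1 / s := by
      show (∑ j, b.coord j x * Real.exp (-2 * w j)) = 1 / s
      simp only [hcx]
      rw [Finset.sum_congr rfl fun j _ => hue j, ← Finset.sum_div, hv1]
    show (∑ j, ((b.coord j x * Real.exp (-2 * w j)) / zf x) • q j) = y
    have : ∀ j, (b.coord j x * Real.exp (-2 * w j)) / zf x = v j := by
      intro j
      rw [hcx, hue, hzx]
      field_simp
    rw [Finset.sum_congr rfl fun j _ => by rw [this j]]
    exact c.linear_combination_coord_eq_self y
end
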